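/- arXiv:2509.15214 — 2 statements merged into one kernel-verified Lean document; each statement's English description precedes it below -/
import Mathlib

section
/- Let B be a finite nonempty set and F : B → B a function, viewed as a linear operator on the complex vector space with basis B (sending the basis vector b to the basis vector F(b)). Let Z be the maximal subset of B on which F restricts to a permutation, and for each k ≥ 1 let C_k(F) denote the number of cycles of length k in the cycle decomposition of F restricted to Z. Then for every complex number s, det(Id + s·F) = (1+s)^{C_1(F)} · ∏_{k>1} (1 − (−s)^k)^{C_k(F)}. Equivalently, det(Id + s·F) = ∏_{k≥1} (1 − (−s)^k)^{C_k(F)}. -/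
/-!
Since `F` maps `Z` into itself, the matrix of `1 + s F` is block triangular for the splitting
`B = Z ⊔ (B \ Z)`. Every orbit of `F` eventually reaches a periodic point, and the periodic
points form a set on which `F` is a bijection, hence lie in `Z`; ordering `B \ Z` by the time
needed to enter `Z` makes that block unitriangular, so it contributes `1`. On `Z` the matrix is
block diagonal along the cycles of `σ`. The fixed points give `(1 + s) ^ C₁`, and on a `k`-cycle
the only permutations with a nonzero Leibniz term are the identity and the cycle itself, which
gives `1 + sign(cycle) • s ^ k = 1 - (-s) ^ k`.
-/

open Matrix

namespace Matrix

variable {m α R : Type*} [Fintype m] [DecidableEq m] [CommRing R]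

theorem det_eq_prod_det_toSquareBlock_of_apply_eq_zero [Fintype α] [DecidableEq α]
    (M : Matrix m m R) (b : m → α) (h : ∀ i j, b i ≠ b j → M i j = 0) :
    M.det = ∏ a, (M.toSquareBlock b a).det := by
  -- A block-diagonal matrix is block triangular for any linear order on the labels.
  let : LinearOrder α := LinearOrder.lift' _ (Fintype.equivFin α).injective
  exact BlockTriangular.det_fintype fun i j hij => h i j hij.ne'

theorem det_eq_one_of_blockTriangular [LinearOrder α] {M : Matrix m m R} {b : m → α}
    (hM : M.BlockTriangular b) (hblock : ∀ i j, b i = b j → M i j = (1 : Matrix m m R) i j) :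
    M.det = 1 := by
  classical
  rw [hM.det]
  refine Finset.prod_eq_one fun a _ => ?_
  have hone : M.toSquareBlock b a = 1 := by
    ext i j
    simpa [toSquareBlock_def, one_apply, Subtype.ext_iff] using hblock i j (i.2.trans j.2.symm)
  rw [hone, det_one]

end Matrix

theorem Function.exists_iterate_mem_periodicPts {X : Type*} [Finite X] (f : X → X) (x : X) :
    ∃ n, f^[n] x ∈ periodicPts f := by
  obtain ⟨m, n, heq, hlt⟩ : ∃ m n, f^[m] x = f^[n] x ∧ m < n := by
    obtain ⟨m, n, heq, hne⟩ : ∃ m n, f^[m] x = f^[n] x ∧ m ≠ n := by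
      simpa [Injective] using not_injective_infinite_finite (f^[·] x)
    rcases hne.lt_or_gt with h | h
    · exact ⟨m, n, heq, h⟩
    · exact ⟨n, m, heq.symm, h⟩
  refine ⟨m, mk_mem_periodicPts (n := n - m) (by omega) ?_⟩
  rw [IsPeriodicPt, IsFixedPt, ← iterate_add_apply, Nat.sub_add_cancel hlt.le, heq]

theorem Nat.find_iterate_apply_lt {X : Type*} {f : X → X} {p : X → Prop} [DecidablePred p]
    (hp : ∀ x, ∃ n, p (f^[n] x)) {x : X} (hx : ¬p x) :
    Nat.find (hp (f x)) < Nat.find (hp x) := by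
  rw [Nat.find_comp_succ (hp x) (hp (f x)) hx]
  exact Nat.lt_succ_self _

theorem Equiv.Perm.IsCycle.eq_one_or_eq_of_forall_apply_eq_or {Y : Type*} [Finite Y]
    {π τ : Perm Y} (hc : π.IsCycle) (hfix : ∀ y, π y ≠ y) (h : ∀ y, τ y = y ∨ τ y = π y) :
    τ = 1 ∨ τ = π := by
  refine or_iff_not_imp_left.2 fun hτ => ?_
  obtain ⟨y₀, hy₀⟩ : ∃ y, τ y ≠ y := not_forall.1 fun h' => hτ (Equiv.ext h')
  have hpow (n : ℕ) : τ ((π ^ n) y₀) = π ((π ^ n) y₀) := by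
    induction n with
    | zero => exact (h y₀).resolve_left hy₀
    | succ n ih =>
      rw [pow_succ', Perm.mul_apply]
      refine (h _).resolve_left fun hfixed => hfix ((π ^ n) y₀) (τ.injective ?_)
      rw [hfixed, ih]
  ext y
  obtain ⟨n, rfl⟩ := hc.exists_pow_eq (hfix y₀) (hfix y)
  exact hpow n

section funMatrix

variable {X : Type*} [DecidableEq X]

def funMatrix (R : Type*) [Zero R] [One R] (f : X → X) : Matrix X X R :=
  of fun i j => if i = f j then 1 else 0

theorem funMatrix_apply {R : Type*} [Zero R] [One R] (f : X → X) (i j : X) :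
    funMatrix R f i j = if i = f j then 1 else 0 :=
  rfl

variable {R : Type*} [CommRing R]

theorem one_add_smul_funMatrix_apply_of_ne {f : X → X} (s : R) {i j : X} (h : i ≠ f j) :
    (1 + s • funMatrix R f) i j = (1 : Matrix X X R) i j := by
  simp [funMatrix_apply, h]

theorem toSquareBlockProp_one_add_smul_funMatrix {f : X → X} {p : X → Prop}
    (hf : ∀ x, p x → p (f x)) (s : R) :
    (1 + s • funMatrix R f).toSquareBlockProp p = 1 + s • funMatrix R (Subtype.map f hf) := by
  ext i j
  simp [toSquareBlockProp_def, funMatrix_apply, one_apply, Subtype.ext_iff, Subtype.map]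

theorem det_one_add_smul_funMatrix_eq_restrict [Fintype X] {f : X → X} (p : X → Prop)
    [DecidablePred p] (hf : ∀ x, p x → p (f x)) (hp : ∀ x, ∃ n, p (f^[n] x)) (s : R) :
    (1 + s • funMatrix R f).det = (1 + s • funMatrix R (Subtype.map f hf)).det := by
  let depth (x : X) : ℕ := Nat.find (hp x)
  have hdepth {i j : X} (hj : ¬p j) (hij : depth j ≤ depth i) : i ≠ f j := by
    rintro rfl
    exact (Nat.find_iterate_apply_lt hp hj).not_ge hij
  rw [twoBlockTriangular_det _ p, toSquareBlockProp_one_add_smul_funMatrix hf,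
    det_eq_one_of_blockTriangular (b := fun i : {x // ¬p x} => depth i), mul_one]
  · intro i j hij
    rw [toSquareBlockProp_def, of_apply, one_add_smul_funMatrix_apply_of_ne s (hdepth j.2 hij.le)]
    exact one_apply_ne fun h => hij.ne' (congrArg depth h)
  · intro i j hij
    simp only [toSquareBlockProp_def, of_apply,
      one_add_smul_funMatrix_apply_of_ne s (hdepth j.2 hij.ge), one_apply, Subtype.ext_iff]
  · intro i hi j hj
    rw [one_add_smul_funMatrix_apply_of_ne s fun h : i = f j => hi (h ▸ hf j hj),
      one_apply_ne fun h : i = j => hi (h ▸ hj)]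

theorem det_one_add_smul_funMatrix_of_isCycle [Fintype X] {π : Equiv.Perm X} (hc : π.IsCycle)
    (hfix : ∀ x, π x ≠ x) (s : R) :
    (1 + s • funMatrix R π).det = 1 - (-s) ^ Fintype.card X := by
  have hsupp : π.support = Finset.univ := by
    ext x
    simp [hfix x]
  have happly (i j : X) :
      (1 + s • funMatrix R π) i j = (if i = j then 1 else 0) + if i = π j then s else 0 := by
    simp [funMatrix_apply, one_apply]
  have hdiag : ∏ i, (1 + s • funMatrix R π) ((1 : Equiv.Perm X) i) i = 1 := by
    simp [happly, Ne.symm (hfix _)]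
  have hcycle : ∏ i, (1 + s • funMatrix R π) (π i) i = s ^ Fintype.card X := by
    simp [happly, hfix]
  rw [det_apply, Fintype.sum_eq_add 1 π hc.ne_one.symm]
  · rw [hdiag, hcycle, Equiv.Perm.sign_one, one_smul, hc.sign, hsupp, Finset.card_univ,
      Units.smul_def]
    push_cast
    ring
  · rintro τ ⟨hτ1, hτπ⟩
    obtain ⟨x, hx⟩ : ∃ x, τ x ≠ x ∧ τ x ≠ π x := by
      by_contra! h
      exact (hc.eq_one_or_eq_of_forall_apply_eq_or hfix
        fun x => or_iff_not_imp_left.2 (h x)).elim hτ1 hτπ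
    rw [Finset.prod_eq_zero (Finset.mem_univ x) (by simp [happly, hx.1, hx.2]), smul_zero]

theorem det_toSquareBlockProp_of_isCycleOn {σ : Equiv.Perm X} {S : Finset X}
    (hσ : σ.IsCycleOn S) (hS : (S : Set X).Nontrivial) (s : R) :
    ((1 + s • funMatrix R σ).toSquareBlockProp (· ∈ S)).det = 1 - (-s) ^ S.card := by
  rw [toSquareBlockProp_one_add_smul_funMatrix (p := (· ∈ S)) fun x hx => hσ.apply_mem_iff.2 hx,
    ← Fintype.card_coe S]
  exact det_one_add_smul_funMatrix_of_isCycle (hσ.isCycle_subtypePerm hS)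
    (fun x => ne_of_apply_ne Subtype.val (hσ.apply_ne hS x.2)) s

theorem det_toSquareBlockProp_of_forall_apply_eq_self [Fintype X] {f : X → X} {p : X → Prop}
    [DecidablePred p] (hp : ∀ x, p x → f x = x) (s : R) :
    ((1 + s • funMatrix R f).toSquareBlockProp p).det = (1 + s) ^ Fintype.card {x // p x} := by
  have hblock : (1 + s • funMatrix R f).toSquareBlockProp p = (1 + s) • 1 := by
    ext i j
    simp only [toSquareBlockProp_def, of_apply, Matrix.add_apply, Matrix.smul_apply, smul_eq_mul,
      one_apply, funMatrix_apply, hp j j.2, Subtype.ext_iff]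
    split_ifs <;> ring
  rw [hblock, det_smul, det_one, mul_one]

section cycleBlocks

variable [Fintype X] (σ : Equiv.Perm X) (s : R)

theorem det_toSquareBlock_cycleOf_one :
    ((1 + s • funMatrix R σ).toSquareBlock σ.cycleOf 1).det =
      (1 + s) ^ Fintype.card {x // σ x = x} := by
  rw [toSquareBlock, det_toSquareBlockProp_of_forall_apply_eq_self
    (fun x hx => σ.cycleOf_eq_one_iff.1 hx)]
  exact congrArg _ (Fintype.card_congr (Equiv.subtypeEquivRight fun x => σ.cycleOf_eq_one_iff))

theorem det_toSquareBlock_cycleOf_of_mem_cycleFactorsFinset {c : Equiv.Perm X}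
    (hc : c ∈ σ.cycleFactorsFinset) :
    ((1 + s • funMatrix R σ).toSquareBlock σ.cycleOf c).det = 1 - (-s) ^ c.support.card := by
  rw [toSquareBlock, equiv_block_det _ (q := (· ∈ c.support)) fun x => by
    rw [eq_comm, σ.eq_cycleOf_of_mem_cycleFactorsFinset_iff c hc]]
  convert det_toSquareBlockProp_of_isCycleOn
    (σ.isCycleOn_support_of_mem_cycleFactorsFinset hc) ?_ s using 2
  exact Finset.one_lt_card_iff_nontrivial.1
    (σ.mem_cycleFactorsFinset_iff.1 hc).1.two_le_card_support

theorem det_toSquareBlock_cycleOf_of_notMem {c : Equiv.Perm X} (h1 : c ≠ 1)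
    (hc : c ∉ σ.cycleFactorsFinset) :
    ((1 + s • funMatrix R σ).toSquareBlock σ.cycleOf c).det = 1 := by
  have : IsEmpty {x // σ.cycleOf x = c} := ⟨fun ⟨x, hx⟩ => by
    by_cases hσx : σ x = x
    · exact h1 (hx ▸ σ.cycleOf_eq_one_iff.2 hσx)
    · exact hc (hx ▸ σ.cycleOf_mem_cycleFactorsFinset_iff.2 (σ.mem_support.2 hσx))⟩
  exact det_isEmpty

theorem det_one_add_smul_funMatrix_perm :
    (1 + s • funMatrix R σ).det =
      (1 + s) ^ Fintype.card {x // σ x = x} * (σ.cycleType.map fun k => 1 - (-s) ^ k).prod := by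
  have hdiag (i j : X) (hij : σ.cycleOf i ≠ σ.cycleOf j) : (1 + s • funMatrix R σ) i j = 0 :=
    (one_add_smul_funMatrix_apply_of_ne s fun h => hij (by rw [h, σ.cycleOf_self_apply])).trans
      (one_apply_ne fun h => hij (by rw [h]))
  have hsub : σ.cycleFactorsFinset ⊆ Finset.univ.erase 1 := fun c hc =>
    Finset.mem_erase.2
      ⟨fun h : c = 1 => (σ.mem_cycleFactorsFinset_iff.1 hc).1.ne_one h, Finset.mem_univ c⟩
  rw [det_eq_prod_det_toSquareBlock_of_apply_eq_zero _ σ.cycleOf hdiag,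
    ← Finset.mul_prod_erase _ _ (Finset.mem_univ 1), det_toSquareBlock_cycleOf_one,
    ← Finset.prod_subset hsub fun c hc hc' =>
      det_toSquareBlock_cycleOf_of_notMem σ s (Finset.ne_of_mem_erase hc) hc',
    Finset.prod_congr rfl fun c => det_toSquareBlock_cycleOf_of_mem_cycleFactorsFinset σ s,
    Equiv.Perm.cycleType_def, Multiset.map_map]
  rfl

end cycleBlocks

end funMatrix

theorem stmt1_general {B : Type*} [Fintype B] [DecidableEq B] (F : B → B)
    (Z : Finset B) (hZ : Set.BijOn F (Z : Set B) (Z : Set B))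
    (hmax : ∀ W : Set B, Set.BijOn F W W → W ⊆ (Z : Set B))
    (σ : Equiv.Perm Z) (hσ : ∀ z : Z, (σ z : B) = F z) (s : ℂ) :
    Matrix.det ((1 : Matrix B B ℂ) +
        s • Matrix.of (fun i j : B => if i = F j then (1 : ℂ) else 0)) =
      (1 + s) ^ (Fintype.card {z : Z // σ z = z}) *
        (σ.cycleType.map (fun k => (1 - (-s) ^ k))).prod := by
  have hperiodic : Function.periodicPts F ⊆ Z := hmax _ (Function.bijOn_periodicPts F)
  have henter (b : B) : ∃ n, F^[n] b ∈ Z :=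
    (Function.exists_iterate_mem_periodicPts F b).imp fun _ h => hperiodic h
  have hrestrict : Subtype.map F (fun _ hb => hZ.mapsTo hb) = σ :=
    funext fun z => Subtype.ext (hσ z).symm
  change (1 + s • funMatrix ℂ F).det = _
  rw [← det_one_add_smul_funMatrix_perm σ s, ← hrestrict]
  convert det_one_add_smul_funMatrix_eq_restrict (· ∈ Z) (fun _ hb => hZ.mapsTo hb) henter s
    using 2

/-- For `F : B → B` on a finite nonempty set, viewed as a linear operator on
`ℂ^B` sending `e_b` to `e_{F b}`, with `Z` the maximal subset on which `F` restricts to a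
permutation `σ`, we have `det(Id + s F) = (1+s)^{C₁(F)} ∏_{k>1} (1 - (-s)^k)^{C_k(F)}`.
Here `C₁(F)` is the number of fixed points of `σ` and the product over `k > 1` is encoded
via the cycle type of `σ` (the multiset of lengths of cycles of length `≥ 2`). -/
theorem stmt1 {B : Type*} [Fintype B] [DecidableEq B] [Nonempty B] (F : B → B)
    (Z : Finset B) (hZ : Set.BijOn F (Z : Set B) (Z : Set B))
    (hmax : ∀ W : Set B, Set.BijOn F W W → W ⊆ (Z : Set B))
    (σ : Equiv.Perm Z) (hσ : ∀ z : Z, (σ z : B) = F z) (s : ℂ) :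
    Matrix.det ((1 : Matrix B B ℂ) +
        s • Matrix.of (fun i j : B => if i = F j then (1 : ℂ) else 0)) =
      (1 + s) ^ (Fintype.card {z : Z // σ z = z}) *
        (σ.cycleType.map (fun k => (1 - (-s) ^ k))).prod :=
  stmt1_general F Z hZ hmax σ hσ s
end

section
/- Let Γ = (X, Y, s, t, J, L) be a finite abstract isogeny graph in which the degree operator D commutes with L. With A the adjacency operator, Q = D − Id, W₁ the non-backtracking edge operator, S* and T as usual, the following determinant identity holds: det(Id_{ℂ^X} − u²L) · det(Id_{ℂ^Y} − uW₁) = det(Id_{ℂ^X} − uA + u²QL) · det(Id_{ℂ^Y} + uJ), for all u ∈ ℂ. -/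
open Matrix

section

variable {X Y : Type*} [Fintype X] [Fintype Y] [DecidableEq X] [DecidableEq Y]

/-- The operator `ℂ^Y → ℂ^Y` sending the basis vector `y` to `J y`, as a matrix. -/
def Jmat (J : Y → Y) : Matrix Y Y ℂ := Matrix.of fun y' y => if y' = J y then 1 else 0

/-- The operator `ℂ^X → ℂ^X` sending the basis vector `x` to `L x`, as a matrix. -/
def Lmat (L : X → X) : Matrix X X ℂ := Matrix.of fun x' x => if x' = L x then 1 else 0

/-- The non-backtracking edge operator `W₁ : ℂ^Y → ℂ^Y`. -/
def W1mat (s t : Y → X) (J : Y → Y) : Matrix Y Y ℂ :=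
  Matrix.of fun y' y => if s y' = t y ∧ y' ≠ J y then 1 else 0

/-- The adjacency operator `A : ℂ^X → ℂ^X`, `x ↦ Σ_{s(y)=x} t(y)`, as a matrix. -/
def Amat (s t : Y → X) : Matrix X X ℂ :=
  Matrix.of fun x' x => ((Finset.univ.filter (fun y => s y = x ∧ t y = x')).card : ℂ)

/-- The degree operator `D : ℂ^X → ℂ^X`, as a matrix. -/
def Dmat (s : Y → X) : Matrix X X ℂ :=
  Matrix.diagonal fun x => ((Finset.univ.filter (fun y => s y = x)).card : ℂ)

end

section Aux

variable {X Y : Type*} [Fintype X] [Fintype Y] [DecidableEq X] [DecidableEq Y]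

/-- `S* : ℂ^X → ℂ^Y`, `x ↦ Σ_{s(y)=x} y`, as a matrix. -/
def SstarM (s : Y → X) : Matrix Y X ℂ := Matrix.of fun y x => if s y = x then 1 else 0

/-- `T : ℂ^Y → ℂ^X`, `y ↦ t(y)`, as a matrix. -/
def TM (t : Y → X) : Matrix X Y ℂ := Matrix.of fun x y => if x = t y then 1 else 0

/-- `S : ℂ^Y → ℂ^X`, `y ↦ s(y)`, as a matrix. -/
def SM (s : Y → X) : Matrix X Y ℂ := Matrix.of fun x y => if s y = x then 1 else 0

lemma W1_eq (s t : Y → X) (J : Y → Y) (h1 : ∀ y, s (J y) = t y) :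
    W1mat s t J = SstarM s * TM t - Jmat J := by
  ext y' y
  simp only [W1mat, SstarM, TM, Jmat, Matrix.sub_apply, Matrix.mul_apply, Matrix.of_apply,
    ite_mul, one_mul, zero_mul, Finset.sum_ite_eq, Finset.mem_univ, if_true]
  by_cases hy : y' = J y
  · subst hy
    simp [h1]
  · simp [hy]

lemma TJ_eq (s t : Y → X) (J : Y → Y) (L : X → X) (h2 : ∀ y, t (J y) = L (s y)) :
    TM t * Jmat J = Lmat L * SM s := by
  ext x y
  simp only [TM, Jmat, Lmat, SM, Matrix.mul_apply, Matrix.of_apply, mul_ite, ite_mul,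
    mul_one, mul_zero, one_mul, zero_mul, Finset.sum_ite_eq, Finset.sum_ite_eq',
    Finset.mem_univ, if_true]
  rw [h2]

lemma SJ_eq (s t : Y → X) (J : Y → Y) (h1 : ∀ y, s (J y) = t y) :
    SM s * Jmat J = TM t := by
  ext x y
  simp only [SM, Jmat, TM, Matrix.mul_apply, Matrix.of_apply, mul_ite, mul_one, mul_zero,
    Finset.sum_ite_eq', Finset.mem_univ, if_true]
  rw [h1]
  exact if_congr eq_comm rfl rfl

lemma TSstar_eq (s t : Y → X) : TM t * SstarM s = Amat s t := by
  ext x' x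
  simp only [TM, SstarM, Amat, Matrix.mul_apply, Matrix.of_apply]
  rw [← Finset.sum_boole]
  congr 1
  ext y
  by_cases h : x' = t y <;> by_cases h' : s y = x <;> simp [h, h', and_comm, eq_comm]

lemma SSstar_eq (s : Y → X) : SM s * SstarM s = Dmat s := by
  ext x' x
  simp only [SM, SstarM, Dmat, Matrix.mul_apply, Matrix.of_apply, Matrix.diagonal_apply]
  by_cases h : x' = x
  · subst h
    simp only [if_true]
    rw [← Finset.sum_boole]
    congr 1
    ext y
    by_cases h' : s y = x' <;> simp [h']
  · rw [if_neg h]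
    apply Finset.sum_eq_zero
    intro y _
    by_cases h1 : s y = x' <;> by_cases h2 : s y = x <;> simp_all

end Aux

/-- for a finite abstract isogeny graph whose degree operator `D` commutes
with `L`, with `Q = D − Id`,
`det(Id − u²L) det(Id − uW₁) = det(Id − uA + u²QL) det(Id + uJ)` for all `u ∈ ℂ`. -/
theorem stmt7 {X Y : Type*} [Fintype X] [Fintype Y] [DecidableEq X] [DecidableEq Y]
    (s t : Y → X) (J : Y → Y) (L : X → X)
    (h1 : ∀ y, s (J y) = t y) (h2 : ∀ y, t (J y) = L (s y))
    (hcomm : Dmat s * Lmat L = Lmat L * Dmat s) (u : ℂ) :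
    Matrix.det ((1 : Matrix X X ℂ) - u ^ 2 • Lmat L) *
        Matrix.det ((1 : Matrix Y Y ℂ) - u • W1mat s t J) =
      Matrix.det ((1 : Matrix X X ℂ) - u • Amat s t +
          u ^ 2 • ((Dmat s - 1) * Lmat L)) *
        Matrix.det ((1 : Matrix Y Y ℂ) + u • Jmat J) := by
  set A' : Matrix X X ℂ := (1 : Matrix X X ℂ) - u ^ 2 • Lmat L with hA'
  set X₂ : Matrix X X ℂ :=
    (1 : Matrix X X ℂ) - u • Amat s t + u ^ 2 • ((Dmat s - 1) * Lmat L) with hX₂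
  set M : Matrix (X ⊕ Y) (X ⊕ Y) ℂ :=
    Matrix.fromBlocks A' (A' * TM t) (u • SstarM s) (1 + u • Jmat J) with hM
  have hu : u * u = u ^ 2 := by ring
  -- Factorization 1
  have E1 : M = Matrix.fromBlocks A' 0 (u • SstarM s) (1 - u • W1mat s t J) *
      Matrix.fromBlocks 1 (TM t) 0 1 := by
    have c1 : A' * (1 : Matrix X X ℂ) + (0 : Matrix X Y ℂ) * (0 : Matrix Y X ℂ) = A' := by
      simp
    have c2 : A' * TM t + (0 : Matrix X Y ℂ) * (1 : Matrix Y Y ℂ) = A' * TM t := by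
      simp
    have c3 : u • SstarM s * (1 : Matrix X X ℂ) +
        (1 - u • W1mat s t J) * (0 : Matrix Y X ℂ) = u • SstarM s := by
      simp
    have c4 : u • SstarM s * TM t + (1 - u • W1mat s t J) * (1 : Matrix Y Y ℂ) =
        1 + u • Jmat J := by
      rw [Matrix.mul_one, Matrix.smul_mul, W1_eq s t J h1, smul_sub]
      abel
    rw [Matrix.fromBlocks_multiply, c1, c2, c3, c4]
  -- Factorization 2
  have E2 : M = Matrix.fromBlocks 1 (TM t - u • (Lmat L * SM s)) 0 1 *
      Matrix.fromBlocks X₂ 0 (u • SstarM s) (1 + u • Jmat J) := by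
    have c1 : (1 : Matrix X X ℂ) * X₂ +
        (TM t - u • (Lmat L * SM s)) * (u • SstarM s) = A' := by
      simp only [Matrix.one_mul, Matrix.sub_mul, Matrix.smul_mul, Matrix.mul_smul,
        smul_smul, Matrix.mul_assoc]
      rw [TSstar_eq, SSstar_eq, hX₂, hA', Matrix.sub_mul (Dmat s) 1 (Lmat L),
        Matrix.one_mul, ← hcomm]
      module
    have c2 : (1 : Matrix X X ℂ) * (0 : Matrix X Y ℂ) +
        (TM t - u • (Lmat L * SM s)) * (1 + u • Jmat J) = A' * TM t := by
      simp only [Matrix.mul_zero, zero_add, Matrix.sub_mul, Matrix.mul_add,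
        Matrix.mul_one, Matrix.smul_mul, Matrix.mul_smul, smul_smul, Matrix.mul_assoc]
      rw [TJ_eq s t J L h2, SJ_eq s t J h1, hA', Matrix.sub_mul, Matrix.one_mul,
        Matrix.smul_mul]
      module
    have c3 : (0 : Matrix Y X ℂ) * X₂ + (1 : Matrix Y Y ℂ) * (u • SstarM s) =
        u • SstarM s := by simp
    have c4 : (0 : Matrix Y X ℂ) * (0 : Matrix X Y ℂ) +
        (1 : Matrix Y Y ℂ) * (1 + u • Jmat J) = 1 + u • Jmat J := by simp
    rw [Matrix.fromBlocks_multiply, c1, c2, c3, c4]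
  have d1 := congrArg Matrix.det E1
  have d2 := congrArg Matrix.det E2
  rw [Matrix.det_mul, Matrix.det_fromBlocks_zero₁₂, Matrix.det_fromBlocks_zero₂₁,
    Matrix.det_one, Matrix.det_one, mul_one, mul_one] at d1
  rw [Matrix.det_mul, Matrix.det_fromBlocks_zero₁₂, Matrix.det_fromBlocks_zero₂₁,
    Matrix.det_one, Matrix.det_one, one_mul, one_mul] at d2
  rw [← d1, d2]
end
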